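/- arXiv:2103.10580 — 3 statements merged into one kernel-verified Lean document; each statement's English description precedes it below -/
import Mathlib

section
/- Let G be a finite simple graph and let W be any subset of V(G). Then 𝓜(S(G)−W, x) = x^{|E(G)|−|V(G)|+|W|} · f(x), where f(x) is the polynomial obtained from the multivariate matching polynomial 𝔐(G−W, x_{G−W}) by substituting x_v := x² − d_G(v) for every vertex v ∈ V(G)∖W (here d_G(v) is the degree of v in G, not in G−W). -/
namespace LM

open Finset

variable {V : Type*}

/-- The set of matchings of `G`, as finsets of edges that pairwise share no vertex. -/
def matchings [Fintype V] [DecidableEq V] (G : SimpleGraph V) [DecidableRel G.Adj] :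
    Finset (Finset (Sym2 V)) :=
  G.edgeFinset.powerset.filter
    (fun M => ∀ e ∈ M, ∀ f ∈ M, e ≠ f → ∀ w : V, w ∈ e → w ∉ f)

/-- The set of vertices covered by a set of edges. -/
def covered [Fintype V] [DecidableEq V] (M : Finset (Sym2 V)) : Finset V :=
  Finset.univ.filter (fun v => ∃ e ∈ M, v ∈ e)

/-- The multivariate matching polynomial `𝔐(G, x_G)`. -/
noncomputable def mvMatch [Fintype V] [DecidableEq V] (G : SimpleGraph V)
    [DecidableRel G.Adj] : MvPolynomial V ℝ :=
  ∑ M ∈ matchings G, (-1 : MvPolynomial V ℝ) ^ M.card *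
    ∏ v ∈ Finset.univ \ covered M, MvPolynomial.X v

/-- The matching polynomial `𝓜(G, x)`. -/
noncomputable def matchPoly [Fintype V] [DecidableEq V] (G : SimpleGraph V)
    [DecidableRel G.Adj] : Polynomial ℝ :=
  ∑ M ∈ matchings G, (-1 : Polynomial ℝ) ^ M.card *
    Polynomial.X ^ (Fintype.card V - 2 * M.card)

/-- The Laplacian matching polynomial `𝓛𝓜(G, x)`. -/
noncomputable def lapMatch [Fintype V] [DecidableEq V] (G : SimpleGraph V)
    [DecidableRel G.Adj] : Polynomial ℝ :=
  ∑ M ∈ matchings G, (-1 : Polynomial ℝ) ^ M.card *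
    ∏ v ∈ Finset.univ \ covered M, (Polynomial.X - Polynomial.C (G.degree v : ℝ))

/-- The largest real root of a polynomial (`sSup` of its set of real roots). -/
noncomputable def lroot (p : Polynomial ℝ) : ℝ := sSup {x : ℝ | p.IsRoot x}

instance instDecidableRelInduceAdj (G : SimpleGraph V) [DecidableRel G.Adj] (s : Set V) :
    DecidableRel (G.induce s).Adj := fun a b =>
  inferInstanceAs (Decidable (G.Adj a b))

/-- The relation underlying the subdivision of `G`: an original vertex `a` is joined to the
new vertex `v_e` of every edge `e` incident with `a`. -/
def sdRel (G : SimpleGraph V) (x y : V ⊕ G.edgeSet) : Prop :=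
  ∃ (a : V) (e : G.edgeSet), x = Sum.inl a ∧ y = Sum.inr e ∧ a ∈ (e : Sym2 V)

instance [Fintype V] [DecidableEq V] (G : SimpleGraph V) [DecidableRel G.Adj]
    (x y : V ⊕ G.edgeSet) : Decidable (sdRel G x y) :=
  inferInstanceAs (Decidable (∃ (_ : V) (_ : G.edgeSet), _ ∧ _ ∧ _))

/-- The subdivision `S(G)` of `G`: every edge `e = {a, b}` is replaced by a new vertex `v_e`
together with the two edges `{a, v_e}` and `{v_e, b}`. -/
def subdivision (G : SimpleGraph V) : SimpleGraph (V ⊕ G.edgeSet) :=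
  SimpleGraph.fromRel (sdRel G)

instance [Fintype V] [DecidableEq V] (G : SimpleGraph V) [DecidableRel G.Adj] :
    DecidableRel (subdivision G).Adj := fun x y =>
  inferInstanceAs (Decidable (x ≠ y ∧ (sdRel G x y ∨ sdRel G y x)))

/-!
A matching of `S(G) − W` is the same thing as a set of darts of `G` leaving vertices outside
`W`, at most one leaving each vertex and at most one on each edge: the dart `(v, e)` stands for
the edge `{v, v_e}`. On the other side, expanding `∏ (x² − d(v))` over the vertices of `G − W`
left uncovered by a matching `n` chooses one of the `d(v)` darts leaving some of these
vertices; adding both darts of every edge of `n` gives a set `P` of darts with at most one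
leaving each vertex. Conversely `P` arises in this way exactly from the matchings `n` made of
edges both of whose darts lie in `P`, so the alternating sum over these `n` vanishes unless no
edge carries two darts of `P`. What survives are the dart sets counted by the matchings of
`S(G) − W`, with the same signs and powers of `x`.
-/

section Matchings

variable [Fintype V] [DecidableEq V]

theorem mem_matchings {G : SimpleGraph V} [DecidableRel G.Adj] {M : Finset (Sym2 V)} :
    M ∈ matchings G ↔
      M ⊆ G.edgeFinset ∧ ∀ e ∈ M, ∀ f ∈ M, e ≠ f → ∀ w : V, w ∈ e → w ∉ f := by
  rw [matchings, mem_filter, mem_powerset]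

theorem mem_covered {M : Finset (Sym2 V)} {v : V} : v ∈ covered M ↔ ∃ e ∈ M, v ∈ e := by
  simp [covered]

end Matchings

section Embeddings

variable {V' : Type*} [Fintype V] [Fintype V'] [DecidableEq V']

theorem exists_map_eq_of_covered_subset (f : V ↪ V') {M : Finset (Sym2 V')}
    (hM : covered M ⊆ univ.map f) : ∃ N : Finset (Sym2 V), N.map f.sym2Map = M := by
  have hsub : M ⊆ univ.map f.sym2Map := by
    intro e he
    induction e using Sym2.ind with
    | h a b =>
      obtain ⟨x, -, rfl⟩ := mem_map.1 (hM (mem_covered.2 ⟨_, he, Sym2.mem_mk_left a b⟩))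
      obtain ⟨y, -, rfl⟩ := mem_map.1 (hM (mem_covered.2 ⟨_, he, Sym2.mem_mk_right _ b⟩))
      exact mem_map.2 ⟨s(x, y), mem_univ _, rfl⟩
  obtain ⟨N, -, rfl⟩ := subset_map_iff.1 hsub
  exact ⟨N, rfl⟩

variable [DecidableEq V] {G : SimpleGraph V} [DecidableRel G.Adj] {H : SimpleGraph V'}
  [DecidableRel H.Adj]

theorem covered_map (f : V ↪ V') (M : Finset (Sym2 V)) :
    covered (M.map f.sym2Map) = (covered M).map f := by
  ext w
  simp only [mem_covered, mem_map, Function.Embedding.sym2Map_apply]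
  aesop

theorem map_mem_matchings_iff (φ : G ↪g H) {M : Finset (Sym2 V)} :
    M.map φ.toEmbedding.sym2Map ∈ matchings H ↔ M ∈ matchings G := by
  have hinj := Sym2.map.injective φ.toEmbedding.injective
  simp only [mem_matchings, map_subset_iff_subset_preimage, forall_mem_map,
    Function.Embedding.sym2Map_apply, Sym2.mem_map, hinj.ne_iff]
  refine and_congr (by simp [subset_iff, φ.map_mem_edgeSet_iff]) ?_
  simp only [forall_exists_index, and_imp, forall_apply_eq_imp_iff₂,
    φ.toEmbedding.injective.eq_iff]
  aesop

theorem image_map_matchings (φ : G ↪g H) :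
    (matchings G).image (Finset.map φ.toEmbedding.sym2Map) =
      (matchings H).filter (covered · ⊆ univ.map φ.toEmbedding) := by
  ext M
  simp only [mem_image, mem_filter]
  constructor
  · rintro ⟨N, hN, rfl⟩
    rw [covered_map]
    exact ⟨(map_mem_matchings_iff φ).2 hN, map_subset_map.2 (subset_univ _)⟩
  · rintro ⟨hM, hcov⟩
    obtain ⟨N, rfl⟩ := exists_map_eq_of_covered_subset _ hcov
    exact ⟨N, (map_mem_matchings_iff φ).1 hM, rfl⟩

theorem sum_matchings_map {R : Type*} [AddCommMonoid R] (φ : G ↪g H)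
    (f : Finset (Sym2 V') → R) :
    ∑ M ∈ matchings G, f (M.map φ.toEmbedding.sym2Map) =
      ∑ M ∈ (matchings H).filter (covered · ⊆ univ.map φ.toEmbedding), f M := by
  rw [← image_map_matchings, sum_image fun _ _ _ _ h => map_injective φ.toEmbedding.sym2Map h]

theorem aeval_mvMatch_induce {R : Type*} [CommRing R] [Algebra ℝ R] (s : Set V) [Fintype s]
    (g : V → R) :
    MvPolynomial.aeval (fun v : s => g v) (mvMatch (G.induce s)) =
      ∑ n ∈ (matchings G).filter (covered · ⊆ s.toFinset),
        (-1) ^ #n * ∏ v ∈ s.toFinset \ covered n, g v := by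
  let φ := SimpleGraph.Embedding.induce (G := G) s
  rw [mvMatch, map_sum]
  refine (sum_congr rfl fun M _ => ?_).trans
    (sum_matchings_map φ fun n => (-1) ^ #n * ∏ v ∈ s.toFinset \ covered n, g v)
  simp only [map_mul, map_pow, map_neg, map_one, map_prod, MvPolynomial.aeval_X, card_map,
    covered_map]
  rw [show s.toFinset = univ.map φ.toEmbedding from rfl, ← Finset.map_sdiff, prod_map]
  rfl

end Embeddings

section PartialSections

variable {α γ : Type*} [DecidableEq α] [Fintype γ] [DecidableEq γ]

def partialSections (π : γ → α) (s : Finset α) : Finset (Finset γ) :=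
  univ.filter fun P => (∀ x ∈ P, π x ∈ s) ∧ Set.InjOn π P

variable {π : γ → α} {s : Finset α} {P : Finset γ}

theorem mem_partialSections :
    P ∈ partialSections π s ↔ (∀ x ∈ P, π x ∈ s) ∧ Set.InjOn π P := by
  simp [partialSections]

theorem card_le_of_mem_partialSections (hP : P ∈ partialSections π s) : #P ≤ #s :=
  card_le_card_of_injOn π (mem_partialSections.1 hP).1 (mem_partialSections.1 hP).2

theorem notMem_of_mem_partialSections (hP : P ∈ partialSections π s) {x : γ} (hx : π x ∉ s) :
    x ∉ P :=
  fun hxP => hx ((mem_partialSections.1 hP).1 x hxP)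

theorem partialSections_empty : partialSections π ∅ = {∅} := by
  ext P
  simp only [mem_partialSections, notMem_empty, mem_singleton]
  exact ⟨fun h => eq_empty_of_forall_notMem fun x hx => h.1 x hx, by rintro rfl; simp⟩

theorem partialSections_insert {a : α} (ha : a ∉ s) :
    partialSections π (insert a s) = partialSections π s ∪
      ((univ.filter (π · = a)) ×ˢ partialSections π s).image fun q => insert q.1 q.2 := by
  ext P
  simp only [mem_union, mem_image, mem_product, mem_filter, mem_univ, true_and, Prod.exists,
    mem_partialSections]
  constructor
  · rintro ⟨hPs, hinj⟩
    by_cases hx : ∃ x ∈ P, π x = a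
    · obtain ⟨x, hxP, rfl⟩ := hx
      refine Or.inr ⟨x, P.erase x, ⟨rfl, fun y hy => ?_, hinj.mono (by simp)⟩, insert_erase hxP⟩
      obtain ⟨hyx, hyP⟩ := mem_erase.1 hy
      exact (mem_insert.1 (hPs y hyP)).resolve_left fun h => hyx (hinj hyP hxP h)
    · push Not at hx
      exact Or.inl ⟨fun y hy => (mem_insert.1 (hPs y hy)).resolve_left (hx y hy), hinj⟩
  · rintro (⟨hPs, hinj⟩ | ⟨x, Q, ⟨rfl, hQs, hinj⟩, rfl⟩)
    · exact ⟨fun y hy => mem_insert_of_mem (hPs y hy), hinj⟩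
    · refine ⟨fun y hy => ?_, ?_⟩
      · rcases mem_insert.1 hy with rfl | hy
        exacts [mem_insert_self _ _, mem_insert_of_mem (hQs y hy)]
      · rw [coe_insert, Set.injOn_insert fun hx => ha (hQs x hx)]
        exact ⟨hinj, fun hx => ha (hx.elim fun y hy => hy.2 ▸ hQs y hy.1)⟩

theorem sum_partialSections_insert {M : Type*} [AddCommMonoid M] {a : α} (ha : a ∉ s)
    (f : Finset γ → M) :
    ∑ P ∈ partialSections π (insert a s), f P =
      ∑ P ∈ partialSections π s, f P +
        ∑ x ∈ univ.filter (π · = a), ∑ Q ∈ partialSections π s, f (insert x Q) := by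
  have hdisj : Disjoint (partialSections π s)
      (((univ.filter (π · = a)) ×ˢ partialSections π s).image fun q => insert q.1 q.2) := by
    simp only [disjoint_right, mem_image, mem_product, mem_filter, mem_univ, true_and]
    rintro _ ⟨⟨x, Q⟩, ⟨rfl, -⟩, rfl⟩ hP
    exact notMem_of_mem_partialSections hP ha (mem_insert_self x Q)
  have hinj : Set.InjOn (fun q : γ × Finset γ => insert q.1 q.2)
      ↑((univ.filter (π · = a)) ×ˢ partialSections π s) := by
    rintro ⟨x, Q⟩ hxQ ⟨x', Q'⟩ hxQ' h
    simp only [mem_coe, mem_product, mem_filter, mem_univ, true_and] at hxQ hxQ' h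
    obtain ⟨rfl, hQ⟩ := hxQ
    obtain ⟨hx', hQ'⟩ := hxQ'
    obtain rfl : x = x' := (mem_insert.1 (h ▸ mem_insert_self x Q)).resolve_right
      (notMem_of_mem_partialSections hQ' ha)
    rw [← erase_insert (notMem_of_mem_partialSections hQ ha), h,
      erase_insert (notMem_of_mem_partialSections hQ' ha)]
  rw [partialSections_insert ha, sum_union hdisj, sum_image hinj, sum_product]

theorem prod_sub_card_fiber {R : Type*} [CommRing R] (π : γ → α) (s : Finset α) (y : R) :
    ∏ a ∈ s, (y - #{x | π x = a}) = ∑ P ∈ partialSections π s, (-1) ^ #P * y ^ (#s - #P) := by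
  induction s using Finset.induction_on with
  | empty => simp [partialSections_empty]
  | @insert a s ha ih =>
    rw [prod_insert ha, ih, sum_partialSections_insert ha, card_insert_of_notMem ha, sub_mul,
      mul_sum, mul_sum, sub_eq_add_neg, ← sum_neg_distrib]
    congr 1
    · refine sum_congr rfl fun P hP => ?_
      rw [Nat.sub_add_comm (card_le_of_mem_partialSections hP), pow_succ]
      ring
    · rw [sum_comm]
      refine sum_congr rfl fun Q hQ => ?_
      have hcard : ∀ x ∈ univ.filter (π · = a), #(insert x Q) = #Q + 1 := fun x hx =>
        card_insert_of_notMem (notMem_of_mem_partialSections hQ ((mem_filter.1 hx).2 ▸ ha))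
      rw [sum_congr rfl fun x hx => by rw [hcard x hx, Nat.add_sub_add_right], sum_const,
        nsmul_eq_mul, pow_succ]
      ring

end PartialSections

theorem sum_powerset_neg_one_pow_card_mul {R α : Type*} [CommRing R] [DecidableEq α]
    (x : Finset α) (r : R) :
    (∑ m ∈ x.powerset, (-1 : R) ^ #m) * r = if x = ∅ then r else 0 := by
  have h := congrArg (Int.cast : ℤ → R) (sum_powerset_neg_one_pow_card (x := x))
  push_cast at h
  rw [h]
  split_ifs <;> simp

section Darts

open SimpleGraph

variable {G : SimpleGraph V}

theorem exists_dart_fst_edge {e : Sym2 V} (he : e ∈ G.edgeSet) {v : V} (hv : v ∈ e) :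
    ∃ d : G.Dart, d.fst = v ∧ d.edge = e := by
  induction e using Sym2.ind with
  | h a b =>
    rcases Sym2.mem_iff.1 hv with rfl | rfl
    · exact ⟨⟨(v, b), he⟩, rfl, rfl⟩
    · exact ⟨⟨(v, a), (show G.Adj a v from he).symm⟩, rfl, Sym2.eq_swap⟩

theorem dart_eq_of_fst_eq_of_edge_eq {d d' : G.Dart} (hfst : d.fst = d'.fst)
    (hedge : d.edge = d'.edge) : d = d' :=
  ((G.dart_edge_eq_iff d d').1 hedge).resolve_right fun h => d'.snd_ne_fst (by rwa [h] at hfst)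

variable [DecidableEq V] {P : Finset G.Dart}

def doubled (P : Finset G.Dart) : Finset (Sym2 V) := (P.filter (·.symm ∈ P)).image Dart.edge

theorem mem_doubled {e : Sym2 V} : e ∈ doubled P ↔ ∃ d ∈ P, d.symm ∈ P ∧ d.edge = e := by
  simp [doubled, and_assoc]

theorem doubled_eq_empty_iff : doubled P = ∅ ↔ Set.InjOn Dart.edge (P : Set G.Dart) := by
  simp only [eq_empty_iff_forall_notMem, mem_doubled, not_exists, not_and]
  refine ⟨fun h d hd d' hd' hedge => ?_, fun h e d hd hds _ => d.symm_ne (h hds hd d.edge_symm)⟩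
  rcases (G.dart_edge_eq_iff d d').1 hedge with rfl | rfl
  · rfl
  · exact absurd rfl (h _ d' hd' hd)

variable [Fintype V] [DecidableRel G.Adj]

variable (G) in
def dartsOf (n : Finset (Sym2 V)) : Finset G.Dart := univ.filter (·.edge ∈ n)

variable {n : Finset (Sym2 V)}

theorem mem_dartsOf {d : G.Dart} : d ∈ dartsOf G n ↔ d.edge ∈ n := by
  simp [dartsOf]

theorem fst_mem_covered_of_mem_dartsOf {d : G.Dart} (hd : d ∈ dartsOf G n) :
    d.fst ∈ covered n :=
  mem_covered.2 ⟨d.edge, mem_dartsOf.1 hd, Sym2.mem_mk_left _ _⟩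

theorem image_fst_dartsOf (hn : n ⊆ G.edgeFinset) : (dartsOf G n).image (·.fst) = covered n := by
  ext v
  refine ⟨fun hv => ?_, fun hv => ?_⟩
  · obtain ⟨d, hd, rfl⟩ := mem_image.1 hv
    exact fst_mem_covered_of_mem_dartsOf hd
  · obtain ⟨e, he, hve⟩ := mem_covered.1 hv
    obtain ⟨d, rfl, rfl⟩ := exists_dart_fst_edge (mem_edgeFinset.1 (hn he)) hve
    exact mem_image_of_mem _ (mem_dartsOf.2 he)

theorem card_dartsOf (hn : n ⊆ G.edgeFinset) : #(dartsOf G n) = 2 * #n := by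
  rw [card_eq_sum_card_fiberwise fun d hd => mem_dartsOf.1 hd, mul_comm, ← smul_eq_mul,
    ← sum_const]
  refine sum_congr rfl fun e he => ?_
  rw [dartsOf, filter_filter, ← G.dart_edge_fiber_card e (mem_edgeFinset.1 (hn he))]
  congr 1
  exact filter_congr fun d _ => ⟨And.right, fun h => ⟨h ▸ he, h⟩⟩

theorem injOn_fst_dartsOf (hn : n ∈ matchings G) :
    Set.InjOn (·.fst) (dartsOf G n : Set G.Dart) := by
  intro d hd d' hd' (hfst : d.fst = d'.fst)
  rw [mem_coe, mem_dartsOf] at hd hd'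
  refine dart_eq_of_fst_eq_of_edge_eq hfst (by_contra fun hne => ?_)
  exact (mem_matchings.1 hn).2 _ hd _ hd' hne d.fst (Sym2.mem_mk_left _ _)
    (hfst ▸ Sym2.mem_mk_left _ _)

theorem card_covered (hn : n ∈ matchings G) : #(covered n) = 2 * #n := by
  rw [← image_fst_dartsOf (mem_matchings.1 hn).1, card_image_of_injOn (injOn_fst_dartsOf hn),
    card_dartsOf (mem_matchings.1 hn).1]

theorem doubled_subset_edgeFinset : doubled P ⊆ G.edgeFinset := by
  intro e he
  obtain ⟨d, -, -, rfl⟩ := mem_doubled.1 he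
  exact mem_edgeFinset.2 d.edge_mem

theorem dartsOf_subset_iff (hn : n ⊆ G.edgeFinset) : dartsOf G n ⊆ P ↔ n ⊆ doubled P := by
  refine ⟨fun h e he => ?_, fun h d hd => ?_⟩
  · obtain ⟨d, -, rfl⟩ := exists_dart_fst_edge (mem_edgeFinset.1 (hn he)) e.out_fst_mem
    exact mem_doubled.2 ⟨d, h (mem_dartsOf.2 he), h (mem_dartsOf.2 (d.edge_symm ▸ he)), rfl⟩
  · obtain ⟨d', hd', hd's, hedge⟩ := mem_doubled.1 (h (mem_dartsOf.1 hd))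
    rcases (G.dart_edge_eq_iff d d').1 hedge.symm with rfl | rfl
    exacts [hd', hd's]

variable {s : Finset V}

theorem disjoint_dartsOf_of_mem_partialSections {Q : Finset G.Dart}
    (hQ : Q ∈ partialSections (·.fst) (s \ covered n)) : Disjoint (dartsOf G n) Q :=
  disjoint_right.2 fun d hd hd' =>
    (mem_sdiff.1 ((mem_partialSections.1 hQ).1 d hd)).2 (fst_mem_covered_of_mem_dartsOf hd')

theorem dartsOf_union_mem_partialSections (hn : n ∈ matchings G) (hns : covered n ⊆ s)
    {Q : Finset G.Dart} (hQ : Q ∈ partialSections (·.fst) (s \ covered n)) :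
    dartsOf G n ∪ Q ∈ partialSections (·.fst) s := by
  have hQ' := mem_partialSections.1 hQ
  rw [mem_partialSections]
  refine ⟨fun d hd => ?_, ?_⟩
  · rcases mem_union.1 hd with hd | hd
    exacts [hns (fst_mem_covered_of_mem_dartsOf hd), (mem_sdiff.1 (hQ'.1 d hd)).1]
  · rw [coe_union, Set.injOn_union (disjoint_coe.2 (disjoint_dartsOf_of_mem_partialSections hQ))]
    refine ⟨injOn_fst_dartsOf hn, hQ'.2, fun d hd d' hd' h => ?_⟩
    exact (mem_sdiff.1 (hQ'.1 d' hd')).2 (h ▸ fst_mem_covered_of_mem_dartsOf hd)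

theorem mem_matchings_of_dartsOf_subset (hP : P ∈ partialSections (·.fst) s)
    (hn : n ⊆ G.edgeFinset) (hnP : dartsOf G n ⊆ P) : n ∈ matchings G ∧ covered n ⊆ s := by
  rw [mem_partialSections] at hP
  refine ⟨mem_matchings.2 ⟨hn, fun e he f hf hef w hwe hwf => hef ?_⟩, fun v hv => ?_⟩
  · obtain ⟨d, rfl, rfl⟩ := exists_dart_fst_edge (mem_edgeFinset.1 (hn he)) hwe
    obtain ⟨d', hfst, rfl⟩ := exists_dart_fst_edge (mem_edgeFinset.1 (hn hf)) hwf
    rw [hP.2 (hnP (mem_dartsOf.2 he)) (hnP (mem_dartsOf.2 hf)) hfst.symm]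
  · obtain ⟨d, hd, rfl⟩ := mem_image.1 ((image_fst_dartsOf hn).symm ▸ hv)
    exact hP.1 d (hnP hd)

theorem sdiff_dartsOf_mem_partialSections (hP : P ∈ partialSections (·.fst) s)
    (hn : n ⊆ G.edgeFinset) (hnP : dartsOf G n ⊆ P) :
    P \ dartsOf G n ∈ partialSections (·.fst) (s \ covered n) := by
  rw [mem_partialSections] at hP ⊢
  refine ⟨fun d hd => mem_sdiff.2 ⟨hP.1 d (mem_sdiff.1 hd).1, fun hcov => ?_⟩,
    hP.2.mono (by simp)⟩
  obtain ⟨d', hd', hfst⟩ := mem_image.1 ((image_fst_dartsOf hn).symm ▸ hcov)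
  exact (mem_sdiff.1 hd).2 (hP.2 (hnP hd') (mem_sdiff.1 hd).1 hfst ▸ hd')

variable (s) in
theorem sum_sigma_matchings_eq_sum_sigma_doubled {R : Type*} [AddCommMonoid R]
    (f : Finset G.Dart → Finset (Sym2 V) → R) :
    ∑ x ∈ ((matchings G).filter (covered · ⊆ s)).sigma
        fun n => partialSections (·.fst) (s \ covered n), f (dartsOf G x.1 ∪ x.2) x.1 =
      ∑ x ∈ (partialSections (·.fst) s).sigma fun P => (doubled P).powerset, f x.1 x.2 := by
  refine sum_bij' (fun x _ => ⟨dartsOf G x.1 ∪ x.2, x.1⟩)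
    (fun x _ => ⟨x.2, x.1 \ dartsOf G x.2⟩) ?_ ?_ ?_ ?_ fun _ _ => rfl
  · rintro ⟨n, Q⟩ h
    simp only [mem_sigma, mem_filter, mem_powerset] at h ⊢
    obtain ⟨⟨hn, hns⟩, hQ⟩ := h
    exact ⟨dartsOf_union_mem_partialSections hn hns hQ,
      (dartsOf_subset_iff (mem_matchings.1 hn).1).1 subset_union_left⟩
  · rintro ⟨P, n⟩ h
    simp only [mem_sigma, mem_filter, mem_powerset] at h ⊢
    have hne := h.2.trans doubled_subset_edgeFinset
    have hnP := (dartsOf_subset_iff hne).2 h.2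
    exact ⟨mem_matchings_of_dartsOf_subset h.1 hne hnP,
      sdiff_dartsOf_mem_partialSections h.1 hne hnP⟩
  · rintro ⟨n, Q⟩ h
    exact Sigma.ext rfl (heq_of_eq (union_sdiff_cancel_left
      (disjoint_dartsOf_of_mem_partialSections (mem_sigma.1 h).2)))
  · rintro ⟨P, n⟩ h
    simp only [mem_sigma, mem_powerset] at h
    have hne := h.2.trans doubled_subset_edgeFinset
    exact Sigma.ext (union_sdiff_of_subset ((dartsOf_subset_iff hne).2 h.2)) HEq.rfl

theorem sum_matchings_sum_partialSections {R : Type*} [CommRing R] (s : Finset V)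
    (f : Finset G.Dart → R) :
    ∑ n ∈ (matchings G).filter (covered · ⊆ s),
        (-1) ^ #n * ∑ Q ∈ partialSections (·.fst) (s \ covered n), f (dartsOf G n ∪ Q) =
      ∑ P ∈ (partialSections (·.fst) s).filter
          fun P : Finset G.Dart => Set.InjOn Dart.edge (P : Set G.Dart),
        f P := by
  simp_rw [mul_sum]
  rw [sum_sigma', sum_sigma_matchings_eq_sum_sigma_doubled s fun P n => (-1) ^ #n * f P,
    sum_sigma]
  simp_rw [← sum_mul, sum_powerset_neg_one_pow_card_mul, sum_ite, sum_const_zero, add_zero]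
  exact sum_congr (filter_congr fun P _ => doubled_eq_empty_iff) fun _ _ => rfl

theorem sum_matchings_prod_sub_degree {R : Type*} [CommRing R] (s : Finset V) (y : R) :
    ∑ n ∈ (matchings G).filter (covered · ⊆ s),
        (-1) ^ #n * ∏ v ∈ s \ covered n, (y - G.degree v) =
      ∑ P ∈ (partialSections (·.fst) s).filter
          fun P : Finset G.Dart => Set.InjOn Dart.edge (P : Set G.Dart),
        (-1) ^ #P * y ^ (#s - #P) := by
  rw [← sum_matchings_sum_partialSections]
  refine sum_congr rfl fun n hn => ?_
  obtain ⟨hn, hns⟩ := mem_filter.1 hn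
  simp_rw [← G.dart_fst_fiber_card_eq_degree]
  rw [prod_sub_card_fiber]
  refine congrArg _ (sum_congr rfl fun Q hQ => ?_)
  rw [card_union_of_disjoint (disjoint_dartsOf_of_mem_partialSections hQ),
    card_dartsOf (mem_matchings.1 hn).1, card_sdiff_of_subset hns, card_covered hn, pow_add,
    pow_mul, neg_one_sq, one_pow, one_mul, Nat.sub_sub]

end Darts

section Subdivision

open SimpleGraph

variable {G : SimpleGraph V}

variable (G) in
def subdivisionEdge : G.Dart ↪ Sym2 (V ⊕ G.edgeSet) where
  toFun d := s(.inl d.fst, .inr ⟨d.edge, d.edge_mem⟩)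
  inj' d d' h := by
    simp only [Sym2.eq_iff, Sum.inl.injEq, Sum.inr.injEq, Subtype.mk.injEq, reduceCtorEq,
      and_false, or_false] at h
    exact dart_eq_of_fst_eq_of_edge_eq h.1 h.2

theorem subdivisionEdge_apply (d : G.Dart) :
    subdivisionEdge G d = s(.inl d.fst, .inr ⟨d.edge, d.edge_mem⟩) :=
  rfl

theorem mem_subdivisionEdge {d : G.Dart} {x : V ⊕ G.edgeSet} :
    x ∈ subdivisionEdge G d ↔ x = .inl d.fst ∨ x = .inr ⟨d.edge, d.edge_mem⟩ :=
  Sym2.mem_iff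

theorem subdivisionEdge_mem_edgeSet (d : G.Dart) :
    subdivisionEdge G d ∈ (subdivision G).edgeSet :=
  (fromRel_adj _ _ _).2 ⟨Sum.inl_ne_inr, .inl ⟨d.fst, _, rfl, rfl, Sym2.mem_mk_left _ _⟩⟩

theorem exists_subdivisionEdge_eq {z : Sym2 (V ⊕ G.edgeSet)}
    (hz : z ∈ (subdivision G).edgeSet) : ∃ d, subdivisionEdge G d = z := by
  induction z using Sym2.ind with
  | h x y =>
    obtain ⟨-, ⟨a, e, rfl, rfl, hae⟩ | ⟨a, e, rfl, rfl, hae⟩⟩ := (fromRel_adj _ _ _).1 hz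
    all_goals
      obtain ⟨d, rfl, hde⟩ := exists_dart_fst_edge e.prop hae
      refine ⟨d, ?_⟩
      rw [subdivisionEdge_apply, show (⟨d.edge, d.edge_mem⟩ : G.edgeSet) = e from Subtype.ext hde]
    exact Sym2.eq_swap

variable [Fintype V] [DecidableEq V] [DecidableRel G.Adj]

theorem map_subdivisionEdge_mem_matchings_iff {P : Finset G.Dart} :
    P.map (subdivisionEdge G) ∈ matchings (subdivision G) ↔
      Set.InjOn (·.fst) (P : Set G.Dart) ∧ Set.InjOn Dart.edge (P : Set G.Dart) := by
  have hedges : P.map (subdivisionEdge G) ⊆ (subdivision G).edgeFinset := fun z hz => by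
    obtain ⟨d, -, rfl⟩ := mem_map.1 hz
    exact mem_edgeFinset.2 (subdivisionEdge_mem_edgeSet d)
  simp only [mem_matchings, hedges, true_and, forall_mem_map,
    (subdivisionEdge G).injective.ne_iff]
  refine ⟨fun h => ⟨fun d hd d' hd' hfst => by_contra fun hne => ?_,
    fun d hd d' hd' hedge => by_contra fun hne => ?_⟩, ?_⟩
  · refine h d hd d' hd' hne (.inl d.fst) (mem_subdivisionEdge.2 (.inl rfl)) ?_
    exact mem_subdivisionEdge.2 (.inl (congrArg _ hfst))
  · refine h d hd d' hd' hne (.inr ⟨d.edge, d.edge_mem⟩) (mem_subdivisionEdge.2 (.inr rfl)) ?_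
    exact mem_subdivisionEdge.2 (.inr (congrArg _ (Subtype.ext hedge)))
  · rintro ⟨hfst, hedge⟩ d hd d' hd' hne w hw hw'
    rw [mem_subdivisionEdge] at hw hw'
    rcases hw with rfl | rfl <;> rcases hw' with h | h <;>
      simp only [Sum.inl.injEq, Sum.inr.injEq, Subtype.mk.injEq, reduceCtorEq] at h
    exacts [hne (hfst hd hd' h), hne (hedge hd hd' h)]

theorem matchings_subdivision :
    matchings (subdivision G) = (univ.filter fun P : Finset G.Dart =>
      Set.InjOn (·.fst) (P : Set G.Dart) ∧ Set.InjOn Dart.edge (P : Set G.Dart)).map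
        (mapEmbedding (subdivisionEdge G)).toEmbedding := by
  ext M
  simp only [mem_map, mem_filter, mem_univ, true_and, RelEmbedding.coe_toEmbedding,
    mapEmbedding_apply]
  refine ⟨fun hM => ?_, ?_⟩
  · have hsub : M ⊆ univ.map (subdivisionEdge G) := fun z hz =>
      let ⟨d, hd⟩ := exists_subdivisionEdge_eq (mem_edgeFinset.1 ((mem_matchings.1 hM).1 hz))
      mem_map.2 ⟨d, mem_univ _, hd⟩
    obtain ⟨P, -, rfl⟩ := subset_map_iff.1 hsub
    exact ⟨P, map_subdivisionEdge_mem_matchings_iff.1 hM, rfl⟩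
  · rintro ⟨P, hP, rfl⟩
    exact map_subdivisionEdge_mem_matchings_iff.2 hP

theorem sum_matchings_subdivision_deleted {R : Type*} [AddCommMonoid R] (W : Finset V)
    (g : ℕ → R) :
    ∑ M ∈ matchings ((subdivision G).induce {x : V ⊕ G.edgeSet | ∀ w ∈ W, x ≠ Sum.inl w}),
        g #M =
      ∑ P ∈ (partialSections (·.fst) Wᶜ).filter
          fun P : Finset G.Dart => Set.InjOn Dart.edge (P : Set G.Dart),
        g #P := by
  let φ := Embedding.induce (G := subdivision G) {x : V ⊕ G.edgeSet | ∀ w ∈ W, x ≠ Sum.inl w}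
  have hcov : ∀ P : Finset G.Dart,
      covered (P.map (subdivisionEdge G)) ⊆ univ.map φ.toEmbedding ↔ ∀ d ∈ P, d.fst ∈ Wᶜ := by
    intro P
    simp [φ, subset_iff, mem_covered, mem_subdivisionEdge, @eq_comm V _ (Prod.fst _)]
  calc _ = ∑ M ∈ matchings ((subdivision G).induce _), g #(M.map φ.toEmbedding.sym2Map) := by
        simp only [card_map]
    _ = _ := sum_matchings_map φ fun M => g #M
    _ = _ := by
        rw [matchings_subdivision, filter_map, sum_map]
        refine sum_congr (ext fun P => ?_) fun P _ => congrArg g (card_map _)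
        simp only [mem_filter, mem_univ, true_and, mem_partialSections, Function.comp_apply,
          RelEmbedding.coe_toEmbedding, mapEmbedding_apply, hcov]
        tauto

theorem card_vertices_subdivision_deleted (W : Finset V) :
    Fintype.card {x : V ⊕ G.edgeSet | ∀ w ∈ W, x ≠ Sum.inl w} = #Wᶜ + #G.edgeFinset := by
  rw [Fintype.card_of_subtype (Wᶜ.disjSum univ) fun x => ?_, card_disjSum, card_univ,
    edgeFinset_card]
  cases x <;> simp

end Subdivision

/-- For any subset `W ⊆ V(G)`,
`𝓜(S(G)−W, x) = x^{|E(G)|−|V(G)|+|W|} · f(x)` where `f` is obtained from the multivariate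
matching polynomial `𝔐(G−W)` by the substitution `x_v := x² − d_G(v)`.  Since the exponent
`|E(G)|−|V(G)|+|W|` may be negative, the identity is stated equivalently (multiplying both
sides by `x^{|V(G)|}`) as a polynomial identity with exponents `|V(G)|` and `|E(G)|+|W|`. -/
theorem matchPoly_subdivision_deleted [Fintype V] [DecidableEq V] (G : SimpleGraph V)
    [DecidableRel G.Adj] (W : Finset V) :
    Polynomial.X ^ (Fintype.card V) *
        matchPoly ((subdivision G).induce
          {x : V ⊕ G.edgeSet | ∀ w ∈ W, x ≠ Sum.inl w}) =
      Polynomial.X ^ (G.edgeFinset.card + W.card) *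
        MvPolynomial.aeval
          (fun v : {v : V | v ∉ W} =>
            (Polynomial.X ^ 2 - Polynomial.C (G.degree v.val : ℝ) : Polynomial ℝ))
          (mvMatch (G.induce {v : V | v ∉ W})) := by
  have hcompl : {v : V | v ∉ W}.toFinset = Wᶜ := by ext; simp
  rw [matchPoly, sum_matchings_subdivision_deleted W
      fun k => (-1 : Polynomial ℝ) ^ k * Polynomial.X ^ (_ - 2 * k),
    aeval_mvMatch_induce _ fun v => Polynomial.X ^ 2 - Polynomial.C (G.degree v : ℝ), hcompl]
  simp_rw [map_natCast Polynomial.C]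
  rw [sum_matchings_prod_sub_degree, mul_sum, mul_sum]
  refine sum_congr rfl fun P hP => ?_
  have hPW := card_le_of_mem_partialSections (mem_filter.1 hP).1
  have hPE : #P ≤ #G.edgeFinset := card_le_card_of_injOn _
    (fun d _ => SimpleGraph.mem_edgeFinset.2 d.edge_mem) (mem_filter.1 hP).2
  rw [card_vertices_subdivision_deleted, ← W.card_compl_add_card, ← pow_mul, mul_left_comm,
    ← pow_add, mul_left_comm, ← pow_add]
  congr 2
  omega

end LM
end

section
/- Let G be a finite connected simple graph with |E(G)| ≥ |V(G)|. Then the subdivision S(G) contains a matching that saturates the set V(G), i.e., a matching M of S(G) such that every original vertex of G is covered by some edge of M. -/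
/-!
Matching each original vertex `a` to the subdivision vertex `v_e` of an incident edge `e` is a
matching of `S(G)` as soon as distinct vertices get distinct edges, so by Hall's theorem it
suffices that every set `S` of vertices meets at least `|S|` edges. For `S = V(G)` this is
`|E(G)| ≥ |V(G)|`. Otherwise pick `w ∉ S` and send each `v ∈ S` to the first edge of a shortest
path from `v` to `w`: the distance to `w` drops strictly along that edge, so two vertices of `S`
cannot be sent to the same edge.
-/

namespace LM

open Finset

variable {V : Type*}

theorem _root_.SimpleGraph.Connected.exists_adj_dist_lt {G : SimpleGraph V} (hG : G.Connected)
    {v w : V} (hvw : v ≠ w) : ∃ u, G.Adj v u ∧ G.dist u w < G.dist v w := by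
  obtain ⟨p, hp⟩ := hG.exists_walk_length_eq_dist v w
  cases p with
  | nil => exact absurd rfl hvw
  | @cons _ u _ hadj q =>
    refine ⟨u, hadj, ?_⟩
    have := G.dist_le q
    rw [SimpleGraph.Walk.length_cons] at hp
    omega

section Hall

variable [Fintype V] [DecidableEq V] {G : SimpleGraph V} [DecidableRel G.Adj]

theorem card_le_card_biUnion_incidenceFinset_of_notMem (hG : G.Connected) {S : Finset V} {w : V}
    (hw : w ∉ S) : #S ≤ #(S.biUnion fun v => G.incidenceFinset v) := by
  have hstep : ∀ v ∈ S, ∃ u, G.Adj v u ∧ G.dist u w < G.dist v w := fun v hv =>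
    hG.exists_adj_dist_lt (ne_of_mem_of_not_mem hv hw)
  choose! u hadj hlt using hstep
  refine card_le_card_of_injOn (fun v => s(v, u v)) (fun v hv => ?_) (fun v hv v' hv' heq => ?_)
  · exact mem_biUnion.2 ⟨v, hv, (G.mem_incidenceFinset _ _).2
      ⟨G.mem_edgeSet.2 (hadj v hv), Sym2.mem_mk_left _ _⟩⟩
  · rcases Sym2.eq_iff.1 heq with ⟨rfl, -⟩ | ⟨hvu, hv'u⟩
    · rfl
    · have := hlt v hv
      have := hlt v' hv'
      rw [hvu, hv'u] at *
      omega

theorem card_le_card_biUnion_incidenceFinset (hG : G.Connected)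
    (hcard : Fintype.card V ≤ #G.edgeFinset) (S : Finset V) :
    #S ≤ #(S.biUnion fun v => G.incidenceFinset v) := by
  by_cases hS : S = univ
  · subst hS
    have hedges : G.edgeFinset ⊆ univ.biUnion fun v => G.incidenceFinset v := by
      intro e he
      induction e with
      | h a b => exact mem_biUnion.2 ⟨a, mem_univ a, (G.mem_incidenceFinset _ _).2
          ⟨G.mem_edgeFinset.1 he, Sym2.mem_mk_left a b⟩⟩
    exact (card_univ.trans_le hcard).trans (card_le_card hedges)
  · obtain ⟨w, hw⟩ := not_forall.1 (mt eq_univ_of_forall hS)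
    exact card_le_card_biUnion_incidenceFinset_of_notMem hG hw

theorem exists_injective_mem_incidenceSet (hG : G.Connected)
    (hcard : Fintype.card V ≤ #G.edgeFinset) :
    ∃ f : V → G.edgeSet, Function.Injective f ∧ ∀ v, v ∈ (f v : Sym2 V) := by
  obtain ⟨f, hinj, hf⟩ :=
    (all_card_le_biUnion_card_iff_exists_injective fun v => G.incidenceFinset v).1
      (card_le_card_biUnion_incidenceFinset hG hcard)
  have hinc : ∀ v, f v ∈ G.incidenceSet v := fun v => (G.mem_incidenceFinset v (f v)).1 (hf v)
  exact ⟨fun v => ⟨f v, (hinc v).1⟩, fun v v' h => hinj (congrArg Subtype.val h),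
    fun v => (hinc v).2⟩

end Hall

section Subdivision

variable {G : SimpleGraph V}

theorem subdivision_adj_inl_inr {a : V} {e : G.edgeSet} :
    (subdivision G).Adj (Sum.inl a) (Sum.inr e) ↔ a ∈ (e : Sym2 V) := by
  simp [subdivision, sdRel]

variable [Fintype V] [DecidableEq V] [DecidableRel G.Adj]

def incidenceMatching (f : V → G.edgeSet) : Finset (Sym2 (V ⊕ G.edgeSet)) :=
  univ.image fun a => s(Sum.inl a, Sum.inr (f a))

theorem incidenceMatching_mem_matchings {f : V → G.edgeSet} (hinj : Function.Injective f)
    (hf : ∀ a, a ∈ (f a : Sym2 V)) : incidenceMatching f ∈ matchings (subdivision G) := by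
  simp only [matchings, incidenceMatching, mem_filter, mem_powerset, forall_mem_image,
    mem_univ, forall_const]
  refine ⟨fun x hx => ?_, fun a b hab w hwa hwb => ?_⟩
  · obtain ⟨a, -, rfl⟩ := mem_image.1 hx
    exact (subdivision G).mem_edgeFinset.2 (subdivision_adj_inl_inr.2 (hf a))
  · have hab : a ≠ b := fun h => hab (h ▸ rfl)
    rcases Sym2.mem_iff.1 hwa with rfl | rfl <;> rcases Sym2.mem_iff.1 hwb with h | h
    · exact hab (Sum.inl_injective h)
    · exact Sum.inl_ne_inr h
    · exact Sum.inr_ne_inl h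
    · exact hab (hinj (Sum.inr_injective h))

theorem inl_mem_covered_incidenceMatching (f : V → G.edgeSet) (a : V) :
    Sum.inl a ∈ covered (incidenceMatching f) :=
  mem_filter.2 ⟨mem_univ _, _, mem_image_of_mem _ (mem_univ a), Sym2.mem_mk_left _ _⟩

end Subdivision

/-- If `G` is a finite connected graph with `|E(G)| ≥ |V(G)|`, then the
subdivision `S(G)` has a matching saturating the set `V(G)` of original vertices. -/
theorem subdivision_exists_matching_saturating [Fintype V] [DecidableEq V]
    (G : SimpleGraph V) [DecidableRel G.Adj] (hG : G.Connected)
    (h : Fintype.card V ≤ G.edgeFinset.card) :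
    ∃ M ∈ matchings (subdivision G), ∀ v : V, Sum.inl v ∈ covered M := by
  obtain ⟨f, hinj, hf⟩ := exists_injective_mem_incidenceSet hG h
  exact ⟨incidenceMatching f, incidenceMatching_mem_matchings hinj hf,
    inl_mem_covered_incidenceMatching f⟩

end LM
end

section
/- Let F be a finite simple forest. Then the multivariate matching polynomial of F equals the determinant det(X_F − A(F)), where X_F is the diagonal matrix indexed by V(F) whose (v,v)-entry is the indeterminate x_v and A(F) is the adjacency matrix of F. -/
/-!
Expanding the determinant over permutations, only the permutations `σ` that move every vertex
to a neighbour contribute. In a forest every such `σ` is an involution: if `σ (σ v) ≠ v`, the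
`σ`-orbit of `σ v` returns to `v` without using the edge `s(v, σ v)`, which then is not a bridge.
These involutions are exactly the products of the transpositions along the edges of a matching
`M`, and the term of such a product is `(-1) ^ #M` times the product of the diagonal entries at
the vertices `M` leaves uncovered.
-/

namespace LM

open Finset

variable {V : Type*}

open SimpleGraph

def PairwiseDisjointEdges (M : Finset (Sym2 V)) : Prop :=
  ∀ e ∈ M, ∀ f ∈ M, e ≠ f → ∀ w : V, w ∈ e → w ∉ f

lemma PairwiseDisjointEdges.mono {M N : Finset (Sym2 V)} (h : M ⊆ N)
    (hN : PairwiseDisjointEdges N) : PairwiseDisjointEdges M :=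
  fun e he f hf hef w hw => hN e (h he) f (h hf) hef w hw

section SwapProd

variable [DecidableEq V]

def edgeSwap : Sym2 V → Equiv.Perm V :=
  Sym2.lift ⟨Equiv.swap, Equiv.swap_comm⟩

@[simp] lemma edgeSwap_mk (a b : V) : edgeSwap s(a, b) = Equiv.swap a b := rfl

lemma edgeSwap_apply_of_notMem {e : Sym2 V} {v : V} (hv : v ∉ e) : edgeSwap e v = v := by
  induction e with
  | _ a b =>
    rw [Sym2.mem_iff, not_or] at hv
    exact Equiv.swap_apply_of_ne_of_ne hv.1 hv.2

lemma PairwiseDisjointEdges.pairwise_commute {M : Finset (Sym2 V)}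
    (hM : PairwiseDisjointEdges M) :
    (M : Set (Sym2 V)).Pairwise (Function.onFun Commute edgeSwap) := by
  intro e he f hf hef
  refine Equiv.Perm.Disjoint.commute fun v => ?_
  by_cases hv : v ∈ e
  · exact Or.inr (edgeSwap_apply_of_notMem (hM e he f hf hef v hv))
  · exact Or.inl (edgeSwap_apply_of_notMem hv)

open scoped Classical in
/-- Junk value `1` unless the transpositions along the edges of `M` commute. -/
noncomputable def swapProd (M : Finset (Sym2 V)) : Equiv.Perm V :=
  if h : (M : Set (Sym2 V)).Pairwise (Function.onFun Commute edgeSwap) then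
    M.noncommProd edgeSwap h
  else 1

variable {M : Finset (Sym2 V)}

lemma swapProd_eq_noncommProd (hM : PairwiseDisjointEdges M) :
    swapProd M = M.noncommProd edgeSwap hM.pairwise_commute := by
  rw [swapProd, dif_pos hM.pairwise_commute]

lemma swapProd_apply_of_forall_notMem (hM : PairwiseDisjointEdges M) {v : V}
    (hv : ∀ e ∈ M, v ∉ e) : swapProd M v = v := by
  induction M using Finset.induction with
  | empty => simp [swapProd_eq_noncommProd hM]
  | @insert e M heM ih =>
    have hM' := hM.mono (Finset.subset_insert e M)
    rw [swapProd_eq_noncommProd hM, Finset.noncommProd_insert_of_notMem _ _ _ _ heM,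
      ← swapProd_eq_noncommProd hM', Equiv.Perm.mul_apply,
      ih hM' fun f hf => hv f (Finset.mem_insert_of_mem hf)]
    exact edgeSwap_apply_of_notMem (hv e (Finset.mem_insert_self e M))

lemma swapProd_apply_of_mk_mem (hM : PairwiseDisjointEdges M) {a b : V} (hab : s(a, b) ∈ M) :
    swapProd M a = b := by
  have hM' := hM.mono (Finset.erase_subset s(a, b) M)
  have hfix : swapProd (M.erase s(a, b)) a = a :=
    swapProd_apply_of_forall_notMem hM' fun f hf haf =>
      hM _ hab f (Finset.mem_of_mem_erase hf) (Finset.ne_of_mem_erase hf).symm a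
        (Sym2.mem_mk_left a b) haf
  rw [swapProd_eq_noncommProd hM, ← Finset.mul_noncommProd_erase _ hab,
    ← swapProd_eq_noncommProd hM', Equiv.Perm.mul_apply, hfix, edgeSwap_mk,
    Equiv.swap_apply_left]

lemma sign_swapProd [Fintype V] (hM : PairwiseDisjointEdges M) (hdiag : ∀ e ∈ M, ¬e.IsDiag) :
    Equiv.Perm.sign (swapProd M) = (-1) ^ M.card := by
  rw [swapProd_eq_noncommProd hM, Finset.map_noncommProd, Finset.noncommProd_eq_prod,
    ← Finset.prod_const]
  refine Finset.prod_congr rfl fun e he => ?_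
  induction e with
  | _ a b => exact Equiv.Perm.sign_swap (by simpa using hdiag _ he)

end SwapProd

lemma _root_.SimpleGraph.IsAcyclic.apply_apply_eq_self [Finite V] {F : SimpleGraph V}
    (hF : F.IsAcyclic) {σ : Equiv.Perm V} (hσ : ∀ v, σ v = v ∨ F.Adj v (σ v)) (v : V) :
    σ (σ v) = v := by
  by_contra hvv
  have hv : σ v ≠ v := fun h => hvv (by rw [h, h])
  set H := F.deleteEdges {s(v, σ v)}
  have hbridge : ¬ H.Reachable v (σ v) :=
    isAcyclic_iff_forall_adj_isBridge.mp hF ((hσ v).resolve_left hv)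
  have hstep : ∀ w, H.Reachable (σ v) w → H.Reachable (σ v) (σ w) := by
    intro w hw
    by_cases hw_fixed : σ w = w
    · rwa [hw_fixed]
    refine hw.trans (Adj.reachable (deleteEdges_adj.mpr ⟨(hσ w).resolve_left hw_fixed, ?_⟩))
    intro he
    rcases Sym2.eq_iff.mp he with ⟨rfl, -⟩ | ⟨rfl, h⟩
    · exact hbridge hw.symm
    · exact hvv h
  have horbit : ∀ i : ℕ, H.Reachable (σ v) ((σ ^ i) (σ v)) := by
    intro i
    induction i with
    | zero => rfl
    | succ i ih => rw [pow_succ', Equiv.Perm.mul_apply]; exact hstep _ ih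
  obtain ⟨i, -, hi⟩ :=
    (Equiv.Perm.sameCycle_apply_left.mpr (Equiv.Perm.SameCycle.refl σ v)).exists_pow_eq'
  exact hbridge (hi ▸ horbit i).symm

section Matchings

variable [Fintype V] [DecidableEq V] {G : SimpleGraph V} [DecidableRel G.Adj]
  {M : Finset (Sym2 V)}

lemma mem_matchings_iff : M ∈ matchings G ↔ M ⊆ G.edgeFinset ∧ PairwiseDisjointEdges M := by
  rw [matchings, Finset.mem_filter, Finset.mem_powerset]
  rfl

lemma not_isDiag_of_mem_matchings (hM : M ∈ matchings G) {e : Sym2 V} (he : e ∈ M) :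
    ¬e.IsDiag :=
  G.not_isDiag_of_mem_edgeSet (mem_edgeFinset.mp ((mem_matchings_iff.mp hM).1 he))

lemma mem_covered_iff {v : V} : v ∈ covered M ↔ ∃ e ∈ M, v ∈ e := by
  simp [covered]

lemma card_covered_of_mem_matchings (hM : M ∈ matchings G) : (covered M).card = 2 * M.card := by
  have hcovered : covered M = M.biUnion Sym2.toFinset := by
    ext v
    simp [mem_covered_iff, Sym2.mem_toFinset]
  rw [hcovered, Finset.card_biUnion, Finset.sum_const_nat (m := 2), mul_comm]
  · exact fun e he => Sym2.card_toFinset_of_not_isDiag e (not_isDiag_of_mem_matchings hM he)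
  · intro e he f hf hef
    rw [Function.onFun, Finset.disjoint_left]
    intro w hwe hwf
    exact (mem_matchings_iff.mp hM).2 e he f hf hef w (Sym2.mem_toFinset.mp hwe)
      (Sym2.mem_toFinset.mp hwf)

lemma swapProd_apply_of_notMem_covered (hM : PairwiseDisjointEdges M) {v : V}
    (hv : v ∉ covered M) : swapProd M v = v :=
  swapProd_apply_of_forall_notMem hM fun e he hve => hv (mem_covered_iff.mpr ⟨e, he, hve⟩)

lemma adj_swapProd_apply_of_mem_covered (hM : M ∈ matchings G) {v : V} (hv : v ∈ covered M) :
    G.Adj v (swapProd M v) := by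
  obtain ⟨e, he, hve⟩ := mem_covered_iff.mp hv
  obtain ⟨w, rfl⟩ := Sym2.mem_iff_exists.mp hve
  rw [swapProd_apply_of_mk_mem (mem_matchings_iff.mp hM).2 he]
  exact (mem_edgeSet G).mp (mem_edgeFinset.mp ((mem_matchings_iff.mp hM).1 he))

end Matchings

section Determinant

variable [DecidableEq V] (G : SimpleGraph V) [DecidableRel G.Adj] {R : Type*} [CommRing R]
  (d : V → R)

lemma diagonal_sub_adjMatrix_apply_self (v : V) :
    (Matrix.diagonal d - G.adjMatrix R) v v = d v := by
  simp

variable {G} in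
lemma diagonal_sub_adjMatrix_apply_of_adj {u v : V} (h : G.Adj u v) :
    (Matrix.diagonal d - G.adjMatrix R) u v = -1 := by
  simp [h, h.ne]

variable [Fintype V]

def permsAlongEdges : Finset (Equiv.Perm V) :=
  Finset.univ.filter fun σ => ∀ v, σ v = v ∨ G.Adj v (σ v)

lemma det_diagonal_sub_adjMatrix_eq_sum_permsAlongEdges :
    (Matrix.diagonal d - G.adjMatrix R).det = ∑ σ ∈ permsAlongEdges G,
      (Equiv.Perm.sign σ : R) * ∏ v, (Matrix.diagonal d - G.adjMatrix R) (σ v) v := by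
  rw [Matrix.det_apply']
  refine (Finset.sum_subset (Finset.subset_univ _) fun σ _ hσ => ?_).symm
  simp only [permsAlongEdges, Finset.mem_filter, Finset.mem_univ, true_and, not_forall,
    not_or] at hσ
  obtain ⟨v, hσv, hnadj⟩ := hσ
  rw [Finset.prod_eq_zero (Finset.mem_univ v), mul_zero]
  simp [hσv, G.adj_comm, hnadj]

variable {G} {M : Finset (Sym2 V)}

lemma swapProd_mem_permsAlongEdges (hM : M ∈ matchings G) : swapProd M ∈ permsAlongEdges G := by
  simp only [permsAlongEdges, Finset.mem_filter, Finset.mem_univ, true_and]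
  intro v
  by_cases hv : v ∈ covered M
  · exact Or.inr (adj_swapProd_apply_of_mem_covered hM hv)
  · exact Or.inl (swapProd_apply_of_notMem_covered (mem_matchings_iff.mp hM).2 hv)

lemma sign_mul_prod_diagonal_sub_adjMatrix_swapProd (hM : M ∈ matchings G) :
    (Equiv.Perm.sign (swapProd M) : R) *
        ∏ v, (Matrix.diagonal d - G.adjMatrix R) (swapProd M v) v =
      (-1) ^ M.card * ∏ v ∈ Finset.univ \ covered M, d v := by
  have hdisj := (mem_matchings_iff.mp hM).2
  have hsign : (Equiv.Perm.sign (swapProd M) : R) = (-1) ^ M.card := by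
    rw [sign_swapProd hdisj fun e he => not_isDiag_of_mem_matchings hM he]
    push_cast
    rfl
  have huncovered : ∀ v ∈ Finset.univ \ covered M,
      (Matrix.diagonal d - G.adjMatrix R) (swapProd M v) v = d v := by
    intro v hv
    rw [swapProd_apply_of_notMem_covered hdisj (Finset.mem_sdiff.mp hv).2,
      diagonal_sub_adjMatrix_apply_self]
  have hcovered : ∀ v ∈ covered M,
      (Matrix.diagonal d - G.adjMatrix R) (swapProd M v) v = -1 := fun v hv =>
    diagonal_sub_adjMatrix_apply_of_adj d (adj_swapProd_apply_of_mem_covered hM hv).symm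
  rw [hsign, ← Finset.prod_sdiff (Finset.subset_univ (covered M)),
    Finset.prod_congr rfl huncovered, Finset.prod_congr rfl hcovered, Finset.prod_const,
    card_covered_of_mem_matchings hM, pow_mul, neg_one_sq, one_pow, mul_one]

end Determinant

section MovedEdges

variable [Fintype V] [DecidableEq V] {σ : Equiv.Perm V}

def movedEdges (σ : Equiv.Perm V) : Finset (Sym2 V) :=
  σ.support.image fun v => s(v, σ v)

lemma mem_movedEdges {e : Sym2 V} : e ∈ movedEdges σ ↔ ∃ v, σ v ≠ v ∧ s(v, σ v) = e := by
  simp [movedEdges]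

lemma not_isDiag_of_mem_movedEdges {e : Sym2 V} (he : e ∈ movedEdges σ) : ¬e.IsDiag := by
  obtain ⟨v, hv, rfl⟩ := mem_movedEdges.mp he
  simpa [eq_comm] using hv

lemma eq_mk_of_mem_movedEdges (hσ : ∀ v, σ (σ v) = v) {e : Sym2 V} (he : e ∈ movedEdges σ)
    {u : V} (hu : u ∈ e) : e = s(u, σ u) := by
  obtain ⟨v, -, rfl⟩ := mem_movedEdges.mp he
  rcases Sym2.mem_iff.mp hu with rfl | rfl
  · rfl
  · rw [hσ, Sym2.eq_swap]

lemma pairwiseDisjointEdges_movedEdges (hσ : ∀ v, σ (σ v) = v) :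
    PairwiseDisjointEdges (movedEdges σ) := fun _ he _ hf hef _ hwe hwf =>
  hef ((eq_mk_of_mem_movedEdges hσ he hwe).trans (eq_mk_of_mem_movedEdges hσ hf hwf).symm)

lemma swapProd_movedEdges (hσ : ∀ v, σ (σ v) = v) : swapProd (movedEdges σ) = σ := by
  have hdisj := pairwiseDisjointEdges_movedEdges hσ
  ext v
  by_cases hv : σ v = v
  · rw [hv]
    refine swapProd_apply_of_forall_notMem hdisj fun e he hve => ?_
    have hdiag := not_isDiag_of_mem_movedEdges he
    rw [eq_mk_of_mem_movedEdges hσ he hve, hv] at hdiag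
    exact hdiag rfl
  · exact swapProd_apply_of_mk_mem hdisj (mem_movedEdges.mpr ⟨v, hv, rfl⟩)

variable {G : SimpleGraph V} [DecidableRel G.Adj]

lemma movedEdges_mem_matchings (hG : σ ∈ permsAlongEdges G) (hσ : ∀ v, σ (σ v) = v) :
    movedEdges σ ∈ matchings G := by
  refine mem_matchings_iff.mpr ⟨fun e he => ?_, pairwiseDisjointEdges_movedEdges hσ⟩
  obtain ⟨v, hv, rfl⟩ := mem_movedEdges.mp he
  simp only [permsAlongEdges, Finset.mem_filter, Finset.mem_univ, true_and] at hG
  exact mem_edgeFinset.mpr ((hG v).resolve_left hv)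

lemma movedEdges_swapProd {M : Finset (Sym2 V)} (hM : M ∈ matchings G) :
    movedEdges (swapProd M) = M := by
  have hdisj := (mem_matchings_iff.mp hM).2
  ext e
  constructor
  · intro he
    obtain ⟨v, hv, rfl⟩ := mem_movedEdges.mp he
    obtain ⟨f, hf, hvf⟩ := mem_covered_iff.mp
      (not_imp_comm.mp (swapProd_apply_of_notMem_covered hdisj) hv)
    obtain ⟨w, rfl⟩ := Sym2.mem_iff_exists.mp hvf
    rwa [swapProd_apply_of_mk_mem hdisj hf]
  · intro he
    induction e with
    | _ a b =>
      have hab : swapProd M a = b := swapProd_apply_of_mk_mem hdisj he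
      refine mem_movedEdges.mpr ⟨a, ?_, by rw [hab]⟩
      rw [hab]
      exact fun hba => not_isDiag_of_mem_matchings hM he (Sym2.mk_isDiag_iff.mpr hba.symm)

end MovedEdges

theorem det_diagonal_sub_adjMatrix_of_isAcyclic [Fintype V] [DecidableEq V] {G : SimpleGraph V}
    [DecidableRel G.Adj] (hG : G.IsAcyclic) {R : Type*} [CommRing R] (d : V → R) :
    (Matrix.diagonal d - G.adjMatrix R).det =
      ∑ M ∈ matchings G, (-1) ^ M.card * ∏ v ∈ Finset.univ \ covered M, d v := by
  have hinvolutive : ∀ σ ∈ permsAlongEdges G, ∀ v, σ (σ v) = v := fun σ hσ =>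
    hG.apply_apply_eq_self (Finset.mem_filter.mp hσ).2
  rw [det_diagonal_sub_adjMatrix_eq_sum_permsAlongEdges]
  refine (Finset.sum_nbij' swapProd movedEdges (fun _ => swapProd_mem_permsAlongEdges)
    (fun σ hσ => movedEdges_mem_matchings hσ (hinvolutive σ hσ))
    (fun _ => movedEdges_swapProd) (fun σ hσ => swapProd_movedEdges (hinvolutive σ hσ))
    (fun _ hM => (sign_mul_prod_diagonal_sub_adjMatrix_swapProd d hM).symm)).symm

/-- For a finite forest `F`, the multivariate matching polynomial equals
`det(X_F − A(F))`, where `X_F` is the diagonal matrix of the indeterminates `x_v` and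
`A(F)` is the adjacency matrix. -/
theorem mvMatch_eq_det_of_isAcyclic [Fintype V] [DecidableEq V] (F : SimpleGraph V)
    [DecidableRel F.Adj] (hF : F.IsAcyclic) :
    mvMatch F =
      Matrix.det
        (Matrix.diagonal (fun v : V => (MvPolynomial.X v : MvPolynomial V ℝ)) -
          F.adjMatrix (MvPolynomial V ℝ)) :=
  (det_diagonal_sub_adjMatrix_of_isAcyclic hF _).symm

end LM
end
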